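/- arXiv:1801.09894 — 2 statements merged into one kernel-verified Lean document; each statement's English description precedes it below -/
import Mathlib

section
/- Let K be a bounded linear operator on H satisfying the ill-posedness assumption with constant Q. Then for every j ∈ ℕ and every h ∈ V_j one has σ_j ‖h‖ ≤ Q ‖P_j(Kh)‖. Consequently the Galerkin projection K_j : V_j → V_j is a linear bijection and its inverse satisfies ‖K_j⁻¹ g‖ ≤ Q σ_j⁻¹ ‖g‖ for all g ∈ V_j, i.e. ‖K_j⁻¹‖_{V_j→V_j} ≤ Q σ_j⁻¹. -/
open MeasureTheory ProbabilityTheory Filter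
open scoped RealInnerProductSpace BigOperators ENNReal NNReal

noncomputable section

/-- The approximation space `V_j`, the span of the basis vectors of level at most `j`. -/
def Vsub {ι H : Type*} [NormedAddCommGroup H] [InnerProductSpace ℝ H]
    (φ : ι → H) (lvl : ι → ℕ) (j : ℕ) : Submodule ℝ H :=
  Submodule.span ℝ (φ '' {k | lvl k ≤ j})

/-- The orthogonal projection `P_j` onto `V_j`, as a continuous linear map on `H`. -/
def Pclm {ι H : Type*} [NormedAddCommGroup H] [InnerProductSpace ℝ H]
    (φ : ι → H) (lvl : ι → ℕ) (hfin : ∀ j, {k : ι | lvl k ≤ j}.Finite) (j : ℕ) :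
    H →L[ℝ] H :=
  ∑ k ∈ (hfin j).toFinset, (innerSL ℝ (φ k)).smulRight (φ k)

theorem Pclm_mem {ι H : Type*} [NormedAddCommGroup H] [InnerProductSpace ℝ H]
    (φ : ι → H) (lvl : ι → ℕ) (hfin : ∀ j, {k : ι | lvl k ≤ j}.Finite) (j : ℕ) (f : H) :
    Pclm φ lvl hfin j f ∈ Vsub φ lvl j := by
  have h : Pclm φ lvl hfin j f = ∑ k ∈ (hfin j).toFinset, ⟪φ k, f⟫ • φ k := by
    simp [Pclm, ContinuousLinearMap.sum_apply]
  rw [h]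
  refine Submodule.sum_mem _ fun k hk => Submodule.smul_mem _ _ ?_
  exact Submodule.subset_span ⟨k, (hfin j).mem_toFinset.mp hk, rfl⟩

/-- The Galerkin projection `K_j := P_j K |_{V_j}` of an operator `K`, as a continuous
linear map from `V_j` to `V_j`. -/
def Kgal {ι H : Type*} [NormedAddCommGroup H] [InnerProductSpace ℝ H]
    (φ : ι → H) (lvl : ι → ℕ) (hfin : ∀ j, {k : ι | lvl k ≤ j}.Finite)
    (K : H →L[ℝ] H) (j : ℕ) : Vsub φ lvl j →L[ℝ] Vsub φ lvl j :=
  ContinuousLinearMap.codRestrict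
    ((Pclm φ lvl hfin j).comp (K.comp (Vsub φ lvl j).subtypeL))
    (Vsub φ lvl j) (fun _ => Pclm_mem φ lvl hfin j _)


section AuxStmt0

variable {ι H : Type*} [NormedAddCommGroup H] [InnerProductSpace ℝ H]
  [CompleteSpace H] (φ : HilbertBasis ι ℝ H) (lvl : ι → ℕ)
  (hfin : ∀ j, {k : ι | lvl k ≤ j}.Finite) (j : ℕ)

omit [CompleteSpace H] in
lemma Pclm_apply' (f : H) :
    Pclm (⇑φ) lvl hfin j f = ∑ k ∈ (hfin j).toFinset, ⟪(φ k : H), f⟫ • φ k := by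
  simp [Pclm, ContinuousLinearMap.sum_apply]

lemma orth [DecidableEq ι] (k l : ι) :
    ⟪(φ k : H), φ l⟫ = if k = l then (1:ℝ) else 0 :=
  orthonormal_iff_ite.mp φ.orthonormal k l

lemma inner_eq_zero_of_mem {h : H} (hh : h ∈ Vsub (⇑φ) lvl j) {k : ι}
    (hk : ¬ lvl k ≤ j) : ⟪h, φ k⟫ = 0 := by
  classical
  induction hh using Submodule.span_induction with
  | mem x hx =>
    obtain ⟨l, hl, rfl⟩ := hx
    rw [orth φ, if_neg]
    rintro rfl; exact hk hl
  | zero => simp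
  | add x y hx hy ihx ihy => rw [inner_add_left, ihx, ihy]; ring
  | smul a x hx ih => rw [real_inner_smul_left, ih]; ring

lemma Pclm_id {h : H} (hh : h ∈ Vsub (⇑φ) lvl j) : Pclm (⇑φ) lvl hfin j h = h := by
  classical
  induction hh using Submodule.span_induction with
  | mem x hx =>
    obtain ⟨l, hl, rfl⟩ := hx
    rw [Pclm_apply']
    rw [Finset.sum_eq_single l]
    · rw [orth φ, if_pos rfl, one_smul]
    · intro k hk hkl
      rw [orth φ, if_neg hkl, zero_smul]
    · intro hl'
      exact absurd ((hfin j).mem_toFinset.mpr hl) hl'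
  | zero => simp
  | add x y hx hy ihx ihy => rw [map_add, ihx, ihy]
  | smul a x hx ih => rw [_root_.map_smul, ih]

lemma inner_Pclm_eq {h : H} (hh : h ∈ Vsub (⇑φ) lvl j) (f : H) :
    ⟪Pclm (⇑φ) lvl hfin j f, h⟫ = ⟪f, h⟫ := by
  have key : ∀ g : H, ⟪Pclm (⇑φ) lvl hfin j f, g⟫ = ⟪f, Pclm (⇑φ) lvl hfin j g⟫ := by
    intro g
    rw [Pclm_apply', Pclm_apply', sum_inner, inner_sum]
    refine Finset.sum_congr rfl fun k _ => ?_
    rw [real_inner_smul_left, real_inner_smul_right, real_inner_comm (φ k) f]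
    ring
  rw [key, Pclm_id φ lvl hfin j hh]

lemma norm_sq_eq {h : H} (hh : h ∈ Vsub (⇑φ) lvl j) :
    ‖h‖ ^ 2 = ∑ k ∈ (hfin j).toFinset, ⟪h, φ k⟫ ^ 2 := by
  have := inner_Pclm_eq φ lvl hfin j hh h
  rw [Pclm_apply', sum_inner] at this
  rw [← real_inner_self_eq_norm_sq, ← this]
  refine Finset.sum_congr rfl fun k _ => ?_
  rw [real_inner_smul_left, real_inner_comm (φ k) h]
  ring

include hfin in
lemma tsum_lower {h : H} (hh : h ∈ Vsub (⇑φ) lvl j) (σ : ℕ → ℝ)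
    (hσanti : ∀ i n, i ≤ n → σ n ≤ σ i) :
    σ j * ‖h‖ ^ 2 ≤ ∑' k, σ (lvl k) * ⟪h, φ k⟫ ^ 2 := by
  rw [tsum_eq_sum (s := (hfin j).toFinset)
    (fun k hk => by
      rw [inner_eq_zero_of_mem φ lvl j hh (by simpa using ((hfin j).mem_toFinset.not.mp hk))]
      ring)]
  rw [norm_sq_eq φ lvl hfin j hh, Finset.mul_sum]
  refine Finset.sum_le_sum fun k hk => ?_
  have hk' : lvl k ≤ j := (hfin j).mem_toFinset.mp hk
  exact mul_le_mul_of_nonneg_right (hσanti (lvl k) j hk') (sq_nonneg _)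

end AuxStmt0

/-- Lemma 6.1 of the paper: under the ill-posedness assumption, on `V_j`
the operator `K` satisfies `σ_j ‖h‖ ≤ Q ‖P_j K h‖`; consequently the Galerkin projection
`K_j : V_j → V_j` is a bijection whose inverse is bounded by `Q σ_j⁻¹`. -/
theorem stmt0 {ι H : Type*} [NormedAddCommGroup H] [InnerProductSpace ℝ H]
    [CompleteSpace H] [Countable ι]
    (φ : HilbertBasis ι ℝ H) (lvl : ι → ℕ)
    (hfin : ∀ j, {k : ι | lvl k ≤ j}.Finite)
    (σ : ℕ → ℝ) (hσpos : ∀ n, 0 < σ n) (hσanti : ∀ i n, i ≤ n → σ n ≤ σ i)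
    (K : H →L[ℝ] H) (Q : ℝ) (hQ : 0 < Q)
    (hill : ∀ f : H,
      Q⁻¹ * (∑' k, σ (lvl k) * ⟪f, φ k⟫ ^ 2) ≤ ⟪K f, f⟫ ∧
      ⟪K f, f⟫ ≤ Q * (∑' k, σ (lvl k) * ⟪f, φ k⟫ ^ 2))
    (j : ℕ) :
    (∀ h ∈ Vsub (⇑φ) lvl j, σ j * ‖h‖ ≤ Q * ‖Pclm (⇑φ) lvl hfin j (K h)‖) ∧
    (∀ g ∈ Vsub (⇑φ) lvl j,
      ∃! h : H, h ∈ Vsub (⇑φ) lvl j ∧ Pclm (⇑φ) lvl hfin j (K h) = g) ∧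
    (∀ g ∈ Vsub (⇑φ) lvl j, ∀ h ∈ Vsub (⇑φ) lvl j,
      Pclm (⇑φ) lvl hfin j (K h) = g → ‖h‖ ≤ Q * (σ j)⁻¹ * ‖g‖) := by
    classical
  have hcoe : ∀ x : Vsub (⇑φ) lvl j,
      (Kgal (⇑φ) lvl hfin K j x : H) = Pclm (⇑φ) lvl hfin j (K x) := fun x => rfl
  have key : ∀ h ∈ Vsub (⇑φ) lvl j, σ j * ‖h‖ ≤ Q * ‖Pclm (⇑φ) lvl hfin j (K h)‖ := by
    intro h hh
    rcases eq_or_ne h 0 with rfl | hne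
    · simp
    have hnorm : 0 < ‖h‖ := norm_pos_iff.mpr hne
    have h1 : σ j * ‖h‖ ^ 2 ≤ ∑' k, σ (lvl k) * ⟪h, φ k⟫ ^ 2 :=
      tsum_lower φ lvl hfin j hh σ hσanti
    have h2 := (hill h).1
    have h3 : ⟪K h, h⟫ = ⟪Pclm (⇑φ) lvl hfin j (K h), h⟫ :=
      (inner_Pclm_eq φ lvl hfin j hh (K h)).symm
    have h4 : ⟪Pclm (⇑φ) lvl hfin j (K h), h⟫ ≤ ‖Pclm (⇑φ) lvl hfin j (K h)‖ * ‖h‖ :=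
      real_inner_le_norm _ _
    have hT : Q⁻¹ * (σ j * ‖h‖ ^ 2) ≤ ‖Pclm (⇑φ) lvl hfin j (K h)‖ * ‖h‖ :=
      le_trans (mul_le_mul_of_nonneg_left h1 (inv_nonneg.mpr hQ.le))
        (le_trans h2 (h3 ▸ h4))
    have hmain : σ j * ‖h‖ ^ 2 ≤ Q * (‖Pclm (⇑φ) lvl hfin j (K h)‖ * ‖h‖) := by
      calc σ j * ‖h‖ ^ 2 = Q * (Q⁻¹ * (σ j * ‖h‖ ^ 2)) := by
            field_simp
        _ ≤ Q * (‖Pclm (⇑φ) lvl hfin j (K h)‖ * ‖h‖) :=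
            mul_le_mul_of_nonneg_left hT hQ.le
    refine le_of_mul_le_mul_right ?_ hnorm
    nlinarith [hmain]
  have hFD : FiniteDimensional ℝ (Vsub (⇑φ) lvl j) :=
    FiniteDimensional.span_of_finite ℝ ((hfin j).image ⇑φ)
  have hinj : Function.Injective (Kgal (⇑φ) lvl hfin K j) := by
    intro x y hxy
    have hsub : (x : H) - y ∈ Vsub (⇑φ) lvl j := Submodule.sub_mem _ x.2 y.2
    have hz : Pclm (⇑φ) lvl hfin j (K ((x : H) - y)) = 0 := by
      have hval : Pclm (⇑φ) lvl hfin j (K x) = Pclm (⇑φ) lvl hfin j (K y) := by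
        rw [← hcoe, ← hcoe, hxy]
      rw [map_sub, map_sub, hval, sub_self]
    have := key _ hsub
    rw [hz, norm_zero, mul_zero] at this
    have hσ := hσpos j
    have : ‖(x : H) - y‖ ≤ 0 := by
      by_contra hc
      push_neg at hc
      nlinarith
    have : (x : H) - y = 0 := by
      simpa using le_antisymm this (norm_nonneg _)
    exact Subtype.ext (sub_eq_zero.mp this)
  have hsurj : Function.Surjective (Kgal (⇑φ) lvl hfin K j) :=
    (LinearMap.injective_iff_surjective
      (f := (Kgal (⇑φ) lvl hfin K j).toLinearMap)).mp hinj
  refine ⟨key, fun g hg => ?_, fun g hg h hh hPh => ?_⟩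
  · obtain ⟨x, hx⟩ := hsurj ⟨g, hg⟩
    refine ⟨(x : H), ⟨x.2, ?_⟩, ?_⟩
    · rw [← hcoe, hx]
    · rintro y ⟨hy, hPy⟩
      have hy' : Kgal (⇑φ) lvl hfin K j ⟨y, hy⟩ = ⟨g, hg⟩ :=
        Subtype.ext (by rw [hcoe]; exact hPy)
      exact congrArg Subtype.val (hinj (hy'.trans hx.symm))
  · have h1 := key h hh
    rw [hPh] at h1
    have hσ := hσpos j
    calc ‖h‖ = (σ j)⁻¹ * (σ j * ‖h‖) := by field_simp
      _ ≤ (σ j)⁻¹ * (Q * ‖g‖) := mul_le_mul_of_nonneg_left h1 (inv_nonneg.mpr hσ.le)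
      _ = Q * (σ j)⁻¹ * ‖g‖ := by ring
end
end

section
/- Let K be a bounded self-adjoint linear operator on H satisfying the ill-posedness assumption with constant Q and the band structure assumption with bandwidth m, and let σ have geometric-type decay with constant Λ. Fix j ∈ ℕ and γ ∈ (0,1), and let B : V_j → V_j be a linear map with ‖B − K_j‖_{V_j→V_j} ≤ γ σ_j / Q. Then B is invertible with ‖B⁻¹‖_{V_j→V_j} ≤ Q / ((1 − γ) σ_j), and there exists a constant C > 0, depending only on Q, γ, m and Λ, such that for every f ∈ H and every z ∈ V_j, ‖B⁻¹(P_j(Kf) + z) − f‖ ≤ C ( ‖f − P_j f‖ + σ_j⁻¹ ‖f‖ ‖B − K_j‖_{V_j→V_j} + σ_j⁻¹ ‖z‖ ). -/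
open MeasureTheory ProbabilityTheory Filter
open scoped RealInnerProductSpace BigOperators ENNReal NNReal

noncomputable section

/-!
Let `q f = ∑ σ_{|k|} ⟪f, φ_k⟫²`. Since `σ` is nonincreasing, `σ_j ‖v‖² ≤ q v` on `V_j` and
`q g ≤ σ_j ‖g‖²` on `V_jᗮ`. The ill-posedness bounds then make the perturbation harmless in the
energy: `(1 - γ) q v ≤ Q ⟪B v, v⟫` on `V_j`, so `B` is coercive with constant `(1 - γ) σ_j / Q`
and Lax–Milgram inverts it.

For the error, write `g = f - P_j f` and split `h - P_j f = u + r` with `B u = P_j K g` and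
`B r = (K_j - B) P_j f + z`; coercivity bounds `r`. For `u`, Cauchy–Schwarz for the positive
form of `K` gives `(1 - γ) q u ≤ Q ⟪K g, u⟫ ≤ Q² (σ_j ‖g‖² q u)^{1/2}`, so `(1 - γ) ‖u‖ ≤ Q² ‖g‖`:
comparing energies instead of norms avoids losing a factor `σ_j⁻¹` on the approximation error.
-/
namespace ContinuousLinearMap

variable {E : Type*} [NormedAddCommGroup E] [InnerProductSpace ℝ E]

theorem IsPositive.inner_apply_sq_le {T : E →L[ℝ] E} (hT : T.IsPositive) (x y : E) :
    ⟪T x, y⟫ ^ 2 ≤ ⟪T x, x⟫ * ⟪T y, y⟫ := by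
  have hsymm : ⟪T y, x⟫ = ⟪T x, y⟫ := by
    rw [hT.inner_left_eq_inner_right, real_inner_comm]
  have hCS := LinearMap.BilinForm.apply_mul_apply_le_of_forall_zero_le
    ((innerₗ E).comp (T : E →ₗ[ℝ] E)) hT.inner_nonneg_left x y
  simp only [LinearMap.comp_apply, coe_coe, innerₗ_apply_apply, hsymm] at hCS
  rwa [sq]

theorem mul_norm_le_norm_apply_of_coercive {T : E →L[ℝ] E} {c : ℝ}
    (hT : ∀ x, c * ‖x‖ ^ 2 ≤ ⟪T x, x⟫) (x : E) : c * ‖x‖ ≤ ‖T x‖ := by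
  rcases (norm_nonneg x).eq_or_lt with hx | hx
  · rw [← hx, mul_zero]
    exact norm_nonneg _
  · refine le_of_mul_le_mul_right ?_ hx
    calc c * ‖x‖ * ‖x‖ = c * ‖x‖ ^ 2 := by ring
      _ ≤ ⟪T x, x⟫ := hT x
      _ ≤ ‖T x‖ * ‖x‖ := real_inner_le_norm _ _

theorem exists_inverse_of_coercive [CompleteSpace E] {T : E →L[ℝ] E} {c : ℝ} (hc : 0 < c)
    (hT : ∀ x, c * ‖x‖ ^ 2 ≤ ⟪T x, x⟫) :
    ∃ S : E →L[ℝ] E, T.comp S = .id ℝ E ∧ S.comp T = .id ℝ E ∧ ‖S‖ ≤ c⁻¹ := by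
  have hcoer : IsCoercive ((innerSL ℝ : E →L[ℝ] E →L[ℝ] ℝ).comp T) :=
    ⟨c, hc, fun x => by simpa [sq, mul_assoc] using hT x⟩
  set e := hcoer.continuousLinearEquivOfBilin
  have he : ∀ x, e x = T x := fun x =>
    (hcoer.unique_continuousLinearEquivOfBilin fun _ => rfl).symm
  refine ⟨e.symm, ?_, ?_, ?_⟩
  · ext y
    simp [← he]
  · ext x
    simp [← he]
  · refine opNorm_le_bound _ (inv_nonneg.2 hc.le) fun y => ?_
    rw [inv_mul_eq_div, le_div_iff₀' hc]
    simpa [← he] using mul_norm_le_norm_apply_of_coercive hT (e.symm y)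

end ContinuousLinearMap

namespace HilbertBasis

variable {ι H : Type*} [NormedAddCommGroup H] [InnerProductSpace ℝ H] (b : HilbertBasis ι ℝ H)

theorem hasSum_inner_sq (f : H) : HasSum (fun k => ⟪f, b k⟫ ^ 2) (‖f‖ ^ 2) := by
  simpa [sq, real_inner_comm f] using b.hasSum_inner_mul_inner f f

theorem summable_mul_inner_sq {w : ι → ℝ} {M : ℝ} (hw : ∀ k, 0 ≤ w k) (hwM : ∀ k, w k ≤ M)
    (f : H) : Summable fun k => w k * ⟪f, b k⟫ ^ 2 :=
  .of_nonneg_of_le (fun k => mul_nonneg (hw k) (sq_nonneg _))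
    (fun k => mul_le_mul_of_nonneg_right (hwM k) (sq_nonneg _))
    ((b.hasSum_inner_sq f).summable.mul_left M)

variable {w : ι → ℝ} {s : ℝ} {f : H}

theorem mul_norm_sq_le_tsum_mul_inner_sq (hw : Summable fun k => w k * ⟪f, b k⟫ ^ 2)
    (hs : ∀ k, ⟪f, b k⟫ ≠ 0 → s ≤ w k) : s * ‖f‖ ^ 2 ≤ ∑' k, w k * ⟪f, b k⟫ ^ 2 := by
  rw [← (b.hasSum_inner_sq f).tsum_eq, ← tsum_mul_left]
  refine ((b.hasSum_inner_sq f).summable.mul_left s).tsum_le_tsum (fun k => ?_) hw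
  by_cases hk : ⟪f, b k⟫ = 0
  · simp [hk]
  · exact mul_le_mul_of_nonneg_right (hs k hk) (sq_nonneg _)

theorem tsum_mul_inner_sq_le_mul_norm_sq (hw : Summable fun k => w k * ⟪f, b k⟫ ^ 2)
    (hs : ∀ k, ⟪f, b k⟫ ≠ 0 → w k ≤ s) : ∑' k, w k * ⟪f, b k⟫ ^ 2 ≤ s * ‖f‖ ^ 2 := by
  rw [← (b.hasSum_inner_sq f).tsum_eq, ← tsum_mul_left]
  refine hw.tsum_le_tsum (fun k => ?_) ((b.hasSum_inner_sq f).summable.mul_left s)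
  by_cases hk : ⟪f, b k⟫ = 0
  · simp [hk]
  · exact mul_le_mul_of_nonneg_right (hs k hk) (sq_nonneg _)

end HilbertBasis

namespace Submodule

variable {H : Type*} [NormedAddCommGroup H] [InnerProductSpace ℝ H]

def galerkin (V : Submodule ℝ H) [V.HasOrthogonalProjection] (K : H →L[ℝ] H) : V →L[ℝ] V :=
  V.orthogonalProjectionOnto ∘L K ∘L V.subtypeL

variable {V : Submodule ℝ H} [CompleteSpace V] {K : H →L[ℝ] H}

theorem inner_galerkin_apply (v w : V) : ⟪V.galerkin K v, w⟫ = ⟪K v, w⟫ :=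
  inner_orthogonalProjectionOnto_eq_of_mem_right w _

variable {q : H → ℝ} {Q s γ : ℝ} {B : V →L[ℝ] V}

theorem mul_le_inner_apply_of_norm_sub_galerkin_le (hQ : 0 < Q) (hγ : 0 ≤ γ)
    (hKq : ∀ f, Q⁻¹ * q f ≤ ⟪K f, f⟫) (hqV : ∀ v ∈ V, s * ‖v‖ ^ 2 ≤ q v)
    (hB : ‖B - V.galerkin K‖ ≤ γ * s / Q) (v : V) :
    (1 - γ) * q v ≤ Q * ⟪B v, v⟫ := by
  have hKv : q v ≤ Q * ⟪K v, v⟫ := by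
    have := mul_le_mul_of_nonneg_left (hKq v) hQ.le
    rwa [← mul_assoc, mul_inv_cancel₀ hQ.ne', one_mul] at this
  have hsplit : ⟪B v, v⟫ = ⟪K v, v⟫ + ⟪(B - V.galerkin K) v, v⟫ := by
    rw [sub_apply, inner_sub_left, inner_galerkin_apply, coe_inner]
    ring
  have hpert : -(γ * s * ‖v‖ ^ 2) ≤ Q * ⟪(B - V.galerkin K) v, v⟫ := by
    have hQB : Q * ‖B - V.galerkin K‖ ≤ γ * s := by rwa [le_div_iff₀' hQ] at hB
    have := (abs_real_inner_le_norm ((B - V.galerkin K) v) v).trans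
      (mul_le_mul_of_nonneg_right ((B - V.galerkin K).le_opNorm v) (norm_nonneg _))
    nlinarith [mul_le_mul_of_nonneg_left (neg_le_of_abs_le this) hQ.le,
      mul_le_mul_of_nonneg_right hQB (sq_nonneg ‖v‖)]
  have hγq : γ * (s * ‖v‖ ^ 2) ≤ γ * q v := mul_le_mul_of_nonneg_left (hqV v v.2) hγ
  rw [hsplit, mul_add]
  linarith

theorem coercive_of_norm_sub_galerkin_le (hQ : 0 < Q) (hγ : 0 ≤ γ) (hγ1 : γ < 1)
    (hKq : ∀ f, Q⁻¹ * q f ≤ ⟪K f, f⟫) (hqV : ∀ v ∈ V, s * ‖v‖ ^ 2 ≤ q v)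
    (hB : ‖B - V.galerkin K‖ ≤ γ * s / Q) (v : V) :
    (1 - γ) * s / Q * ‖v‖ ^ 2 ≤ ⟪B v, v⟫ := by
  rw [div_mul_eq_mul_div, div_le_iff₀' hQ, mul_assoc]
  exact (mul_le_mul_of_nonneg_left (hqV v v.2) (by linarith)).trans
    (mul_le_inner_apply_of_norm_sub_galerkin_le hQ hγ hKq hqV hB v)

theorem norm_le_of_inner_apply_eq_of_mem_orthogonal (hK : K.IsPositive) (hQ : 0 < Q)
    (hs : 0 < s) (hγ : 0 ≤ γ) (hγ1 : γ < 1) (hKq : ∀ f, Q⁻¹ * q f ≤ ⟪K f, f⟫ ∧ ⟪K f, f⟫ ≤ Q * q f)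
    (hqV : ∀ v ∈ V, s * ‖v‖ ^ 2 ≤ q v) (hqVperp : ∀ g ∈ Vᗮ, q g ≤ s * ‖g‖ ^ 2)
    (hB : ‖B - V.galerkin K‖ ≤ γ * s / Q) {g : H} (hg : g ∈ Vᗮ) {u : V}
    (hu : ∀ w : V, ⟪B u, w⟫ = ⟪K g, w⟫) :
    (1 - γ) * ‖u‖ ≤ Q ^ 2 * ‖g‖ := by
  set S := q u
  have hSu : s * ‖u‖ ^ 2 ≤ S := hqV u u.2
  have hS : 0 ≤ S := (by positivity : 0 ≤ s * ‖u‖ ^ 2).trans hSu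
  have hlow : (1 - γ) * S ≤ Q * ⟪K g, u⟫ :=
    hu u ▸ mul_le_inner_apply_of_norm_sub_galerkin_le hQ hγ (fun f => (hKq f).1) hqV hB u
  have hCS : ⟪K g, u⟫ ^ 2 ≤ (Q * (s * ‖g‖ ^ 2)) * (Q * S) :=
    (hK.inner_apply_sq_le g u).trans <| mul_le_mul
      ((hKq g).2.trans (mul_le_mul_of_nonneg_left (hqVperp g hg) hQ.le)) (hKq u).2
      (hK.inner_nonneg_left _) (by positivity)
  have hSbound : (1 - γ) ^ 2 * S ≤ Q ^ 4 * (s * ‖g‖ ^ 2) := by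
    rcases hS.eq_or_lt with h0 | h0
    · rw [← h0, mul_zero]
      positivity
    · refine le_of_mul_le_mul_right ?_ h0
      calc (1 - γ) ^ 2 * S * S = ((1 - γ) * S) ^ 2 := by ring
        _ ≤ (Q * ⟪K g, u⟫) ^ 2 := pow_le_pow_left₀ (by nlinarith) hlow 2
        _ = Q ^ 2 * ⟪K g, u⟫ ^ 2 := by ring
        _ ≤ Q ^ 2 * ((Q * (s * ‖g‖ ^ 2)) * (Q * S)) := by gcongr
        _ = Q ^ 4 * (s * ‖g‖ ^ 2) * S := by ring
  have hsq : s * ((1 - γ) * ‖u‖) ^ 2 ≤ s * (Q ^ 2 * ‖g‖) ^ 2 := by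
    calc s * ((1 - γ) * ‖u‖) ^ 2 = (1 - γ) ^ 2 * (s * ‖u‖ ^ 2) := by ring
      _ ≤ (1 - γ) ^ 2 * S := by gcongr
      _ ≤ Q ^ 4 * (s * ‖g‖ ^ 2) := hSbound
      _ = s * (Q ^ 2 * ‖g‖) ^ 2 := by ring
  have hγ1' : 0 ≤ 1 - γ := by linarith
  exact (pow_le_pow_iff_left₀ (by positivity) (by positivity) two_ne_zero).1
    (le_of_mul_le_mul_left hsq hs)

theorem norm_sub_le_of_apply_eq_starProjection_add (hK : K.IsPositive) (hQ : 0 < Q)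
    (hs : 0 < s) (hγ : 0 ≤ γ) (hγ1 : γ < 1) (hKq : ∀ f, Q⁻¹ * q f ≤ ⟪K f, f⟫ ∧ ⟪K f, f⟫ ≤ Q * q f)
    (hqV : ∀ v ∈ V, s * ‖v‖ ^ 2 ≤ q v) (hqVperp : ∀ g ∈ Vᗮ, q g ≤ s * ‖g‖ ^ 2)
    (hB : ‖B - V.galerkin K‖ ≤ γ * s / Q) {f : H} {z h : V}
    (hh : (B h : H) = V.starProjection (K f) + z) :
    ‖(h : H) - f‖ ≤ (1 + Q ^ 2 / (1 - γ)) * ‖f - V.starProjection f‖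
      + Q / (1 - γ) * (s⁻¹ * ‖f‖ * ‖B - V.galerkin K‖ + s⁻¹ * ‖(z : H)‖) := by
  have hγ1' : 0 < 1 - γ := by linarith
  have hcoer := coercive_of_norm_sub_galerkin_le hQ hγ hγ1 (fun f => (hKq f).1) hqV hB
  obtain ⟨S, hBS, -, -⟩ := B.exists_inverse_of_coercive (by positivity) hcoer
  set g := f - V.starProjection f
  set fV : V := V.orthogonalProjectionOnto f
  set u : V := S (V.orthogonalProjectionOnto (K g))
  set r : V := h - fV - u
  have hg : g ∈ Vᗮ := V.sub_starProjection_mem_orthogonal f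
  have hfV : (fV : H) = f - g := by simp [fV, g]
  have hBu : B u = V.orthogonalProjectionOnto (K g) := DFunLike.congr_fun hBS _
  have hu : ‖(u : H)‖ ≤ Q ^ 2 / (1 - γ) * ‖g‖ := by
    rw [div_mul_eq_mul_div, le_div_iff₀' hγ1']
    refine norm_le_of_inner_apply_eq_of_mem_orthogonal hK hQ hs hγ hγ1 hKq hqV hqVperp hB hg
      fun w => ?_
    rw [hBu, inner_orthogonalProjectionOnto_eq_of_mem_right]
  have hBr : B r = (V.galerkin K - B) fV + z := by
    have hBh : B h = V.orthogonalProjectionOnto (K f) + z :=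
      Subtype.ext (by simpa [coe_orthogonalProjectionOnto_apply] using hh)
    simp only [r, map_sub, hBh, hBu, sub_apply, galerkin, ContinuousLinearMap.comp_apply,
      subtypeL_apply, hfV]
    abel
  have hr : (1 - γ) * s / Q * ‖(r : H)‖ ≤ ‖B - V.galerkin K‖ * ‖f‖ + ‖(z : H)‖ := calc
    (1 - γ) * s / Q * ‖(r : H)‖ ≤ ‖B r‖ := B.mul_norm_le_norm_apply_of_coercive hcoer r
    _ ≤ ‖V.galerkin K - B‖ * ‖fV‖ + ‖z‖ := by
      rw [hBr]
      exact (norm_add_le _ _).trans (add_le_add ((V.galerkin K - B).le_opNorm fV) le_rfl)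
    _ ≤ ‖B - V.galerkin K‖ * ‖f‖ + ‖(z : H)‖ := by
      rw [norm_sub_rev (V.galerkin K) B]
      exact add_le_add (by gcongr; exact V.norm_orthogonalProjectionOnto_apply_le f) le_rfl
  have hr' : ‖(r : H)‖ ≤ Q / (1 - γ) * (s⁻¹ * ‖f‖ * ‖B - V.galerkin K‖ + s⁻¹ * ‖(z : H)‖) := by
    rw [div_mul_eq_mul_div, le_div_iff₀' hγ1']
    rw [div_mul_eq_mul_div, div_le_iff₀' hQ] at hr
    calc (1 - γ) * ‖(r : H)‖ = s⁻¹ * ((1 - γ) * s * ‖(r : H)‖) := by field_simp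
      _ ≤ s⁻¹ * (Q * (‖B - V.galerkin K‖ * ‖f‖ + ‖(z : H)‖)) := by gcongr
      _ = Q * (s⁻¹ * ‖f‖ * ‖B - V.galerkin K‖ + s⁻¹ * ‖(z : H)‖) := by ring
  have hdecomp : (h : H) - f = u + r - g := by
    simp only [r, AddSubgroupClass.coe_sub, hfV]
    abel
  calc ‖(h : H) - f‖ ≤ ‖(u : H)‖ + ‖(r : H)‖ + ‖g‖ :=
      hdecomp ▸ norm_sub_le_of_le (norm_add_le _ _) le_rfl
    _ ≤ _ := by linarith

end Submodule

section LevelSpaces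

variable {ι H : Type*} [NormedAddCommGroup H] [InnerProductSpace ℝ H] {φ : ι → H}
  {lvl : ι → ℕ} {j : ℕ}

theorem mem_Vsub_of_le {k : ι} (hk : lvl k ≤ j) : φ k ∈ Vsub φ lvl j :=
  Submodule.subset_span ⟨k, hk, rfl⟩

theorem inner_eq_zero_of_mem_Vsub (hφ : Orthonormal ℝ φ) {v : H} (hv : v ∈ Vsub φ lvl j)
    {k : ι} (hk : j < lvl k) : ⟪v, φ k⟫ = 0 := by
  have hortho : Vsub φ lvl j ⟂ ℝ ∙ φ k := by
    refine Submodule.isOrtho_span.2 ?_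
    rintro _ ⟨l, hl, rfl⟩ _ rfl
    exact hφ.inner_eq_zero (by rintro rfl; exact hk.not_ge hl)
  exact hortho.inner_eq hv (Submodule.mem_span_singleton_self _)

theorem Pclm_eq_starProjection (hφ : Orthonormal ℝ φ) (hfin : ∀ j, {k : ι | lvl k ≤ j}.Finite)
    [(Vsub φ lvl j).HasOrthogonalProjection] :
    Pclm φ lvl hfin j = (Vsub φ lvl j).starProjection := by
  ext f
  refine (Submodule.eq_starProjection_of_mem_of_inner_eq_zero (Pclm_mem φ lvl hfin j f)
    fun w hw => ?_).symm
  have hortho : ℝ ∙ (f - Pclm φ lvl hfin j f) ⟂ Vsub φ lvl j := by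
    refine Submodule.isOrtho_span.2 ?_
    rintro _ rfl _ ⟨l, hl, rfl⟩
    have hP : Pclm φ lvl hfin j f = ∑ k ∈ (hfin j).toFinset, ⟪φ k, f⟫ • φ k := by
      simp [Pclm]
    rw [inner_sub_left, hP, hφ.inner_left_sum _ ((hfin j).mem_toFinset.2 hl), real_inner_comm]
    simp
  exact hortho.inner_eq (Submodule.mem_span_singleton_self _) hw

theorem Kgal_eq_galerkin (hφ : Orthonormal ℝ φ) (hfin : ∀ j, {k : ι | lvl k ≤ j}.Finite)
    [CompleteSpace (Vsub φ lvl j)] (K : H →L[ℝ] H) :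
    Kgal φ lvl hfin K j = (Vsub φ lvl j).galerkin K := by
  ext v
  simp [Kgal, Submodule.galerkin, Pclm_eq_starProjection hφ hfin]

variable (b : HilbertBasis ι ℝ H) {σ : ℕ → ℝ}

theorem mul_norm_sq_le_tsum_of_mem_Vsub (hσ : Antitone σ)
    (hsum : ∀ f, Summable fun k => σ (lvl k) * ⟪f, b k⟫ ^ 2) {v : H} (hv : v ∈ Vsub (⇑b) lvl j) :
    σ j * ‖v‖ ^ 2 ≤ ∑' k, σ (lvl k) * ⟪v, b k⟫ ^ 2 :=
  b.mul_norm_sq_le_tsum_mul_inner_sq (hsum v) fun _ hk =>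
    hσ (not_lt.1 fun hjk => hk (inner_eq_zero_of_mem_Vsub b.orthonormal hv hjk))

theorem tsum_le_mul_norm_sq_of_mem_orthogonal_Vsub (hσ : Antitone σ)
    (hsum : ∀ f, Summable fun k => σ (lvl k) * ⟪f, b k⟫ ^ 2) {g : H}
    (hg : g ∈ (Vsub (⇑b) lvl j)ᗮ) : ∑' k, σ (lvl k) * ⟪g, b k⟫ ^ 2 ≤ σ j * ‖g‖ ^ 2 :=
  b.tsum_mul_inner_sq_le_mul_norm_sq (hsum g) fun _ hk =>
    hσ (not_le.1 fun hkj => hk (Submodule.inner_left_of_mem_orthogonal (mem_Vsub_of_le hkj) hg)).le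

end LevelSpaces

theorem stmt9_general (Q γ Λ : ℝ) (m : ℕ) (hQ : 0 < Q) (hγ0 : 0 < γ) (hγ1 : γ < 1) :
    ∃ C : ℝ, 0 < C ∧
    ∀ (ι : Type u) (H : Type v), ∀ (_ : NormedAddCommGroup H),
    ∀ (_ : InnerProductSpace ℝ H) (_ : CompleteSpace H) (_ : Countable ι)
      (φ : HilbertBasis ι ℝ H) (lvl : ι → ℕ)
      (hfin : ∀ j, {k : ι | lvl k ≤ j}.Finite)
      (σ : ℕ → ℝ), (∀ n, 0 < σ n) → (∀ i n, i ≤ n → σ n ≤ σ i) → Summable σ →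
      (∀ l, (∑' i : ℕ, σ (l + i)) ≤ Λ * σ l) →
      ∀ (K : H →L[ℝ] H), (∀ x y : H, ⟪K x, y⟫ = ⟪x, K y⟫) →
      (∀ f : H, Q⁻¹ * (∑' k, σ (lvl k) * ⟪f, φ k⟫ ^ 2) ≤ ⟪K f, f⟫ ∧
        ⟪K f, f⟫ ≤ Q * (∑' k, σ (lvl k) * ⟪f, φ k⟫ ^ 2)) →
      (∀ k l : ι, (m : ℤ) < |(lvl l : ℤ) - (lvl k : ℤ)| → ⟪K (φ l), φ k⟫ = 0) →
      ∀ (j : ℕ) (B : Vsub (⇑φ) lvl j →L[ℝ] Vsub (⇑φ) lvl j),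
      ‖B - Kgal (⇑φ) lvl hfin K j‖ ≤ γ * σ j / Q →
      (∃ Binv : Vsub (⇑φ) lvl j →L[ℝ] Vsub (⇑φ) lvl j,
        B.comp Binv = ContinuousLinearMap.id ℝ _ ∧
        Binv.comp B = ContinuousLinearMap.id ℝ _ ∧
        ‖Binv‖ ≤ Q / ((1 - γ) * σ j)) ∧
      ∀ (f : H) (z h : Vsub (⇑φ) lvl j),
        (B h : H) = Pclm (⇑φ) lvl hfin j (K f) + (z : H) →
        ‖(h : H) - f‖ ≤ C * (‖f - Pclm (⇑φ) lvl hfin j f‖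
          + (σ j)⁻¹ * ‖f‖ * ‖B - Kgal (⇑φ) lvl hfin K j‖ + (σ j)⁻¹ * ‖(z : H)‖) := by
  have hγ1' : 0 < 1 - γ := by linarith
  refine ⟨1 + Q ^ 2 / (1 - γ) + Q / (1 - γ), by positivity, ?_⟩
  intro ι H _ _ _ _ φ lvl hfin σ hσ hσanti _ _ K hKsymm hKq _ j B hB
  have : FiniteDimensional ℝ (Vsub (⇑φ) lvl j) :=
    FiniteDimensional.span_of_finite ℝ ((hfin j).image _)
  have hsum (f : H) : Summable fun k => σ (lvl k) * ⟪f, φ k⟫ ^ 2 :=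
    φ.summable_mul_inner_sq (fun k => (hσ _).le) (fun _ => hσanti 0 _ (Nat.zero_le _)) f
  have hK : K.IsPositive := K.isPositive_iff.2 ⟨hKsymm, fun f => (hKq f).1.trans' <|
    mul_nonneg (inv_nonneg.2 hQ.le) (tsum_nonneg fun k => mul_nonneg (hσ _).le (sq_nonneg _))⟩
  have hqV (v : H) (hv : v ∈ Vsub (⇑φ) lvl j) := mul_norm_sq_le_tsum_of_mem_Vsub φ hσanti hsum hv
  have hqVperp (g : H) (hg : g ∈ (Vsub (⇑φ) lvl j)ᗮ) :=
    tsum_le_mul_norm_sq_of_mem_orthogonal_Vsub φ hσanti hsum hg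
  rw [Kgal_eq_galerkin φ.orthonormal hfin K] at hB ⊢
  refine ⟨?_, fun f z h hh => ?_⟩
  · rw [← inv_div]
    exact B.exists_inverse_of_coercive (by have := hσ j; positivity)
      (Submodule.coercive_of_norm_sub_galerkin_le hQ hγ0.le hγ1 (fun f => (hKq f).1) hqV hB)
  · rw [Pclm_eq_starProjection φ.orthonormal hfin] at hh ⊢
    have hbound := Submodule.norm_sub_le_of_apply_eq_starProjection_add hK hQ (hσ j) hγ0.le hγ1
      hKq hqV hqVperp hB hh
    have hX := norm_nonneg (f - (Vsub (⇑φ) lvl j).starProjection f)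
    have hY : 0 ≤ (σ j)⁻¹ * ‖f‖ * ‖B - (Vsub (⇑φ) lvl j).galerkin K‖ + (σ j)⁻¹ * ‖(z : H)‖ := by
      have := hσ j
      positivity
    nlinarith [mul_nonneg (by positivity : 0 ≤ 1 + Q ^ 2 / (1 - γ)) hY,
      mul_nonneg (by positivity : 0 ≤ Q / (1 - γ)) hX]

/-- deterministic core of Proposition 3.2: if `B : V_j → V_j` is close to
the Galerkin projection `K_j` in operator norm, `‖B - K_j‖ ≤ γ σ_j / Q`, then `B` is
invertible with `‖B⁻¹‖ ≤ Q/((1-γ) σ_j)`, and the Galerkin reconstruction from perturbed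
operator and perturbed data satisfies the stated error bound, with a constant `C` depending
only on `Q`, `γ`, `m` and `Λ`. -/
theorem stmt9 (Q γ Λ : ℝ) (m : ℕ) (hQ : 0 < Q) (hγ0 : 0 < γ) (hγ1 : γ < 1) (hΛ : 0 < Λ) :
    ∃ C : ℝ, 0 < C ∧
    ∀ (ι : Type u) (H : Type v), ∀ (_ : NormedAddCommGroup H),
    ∀ (_ : InnerProductSpace ℝ H) (_ : CompleteSpace H) (_ : Countable ι)
      (φ : HilbertBasis ι ℝ H) (lvl : ι → ℕ)
      (hfin : ∀ j, {k : ι | lvl k ≤ j}.Finite)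
      (σ : ℕ → ℝ), (∀ n, 0 < σ n) → (∀ i n, i ≤ n → σ n ≤ σ i) → Summable σ →
      (∀ l, (∑' i : ℕ, σ (l + i)) ≤ Λ * σ l) →
      ∀ (K : H →L[ℝ] H), (∀ x y : H, ⟪K x, y⟫ = ⟪x, K y⟫) →
      (∀ f : H, Q⁻¹ * (∑' k, σ (lvl k) * ⟪f, φ k⟫ ^ 2) ≤ ⟪K f, f⟫ ∧
        ⟪K f, f⟫ ≤ Q * (∑' k, σ (lvl k) * ⟪f, φ k⟫ ^ 2)) →
      (∀ k l : ι, (m : ℤ) < |(lvl l : ℤ) - (lvl k : ℤ)| → ⟪K (φ l), φ k⟫ = 0) →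
      ∀ (j : ℕ) (B : Vsub (⇑φ) lvl j →L[ℝ] Vsub (⇑φ) lvl j),
      ‖B - Kgal (⇑φ) lvl hfin K j‖ ≤ γ * σ j / Q →
      (∃ Binv : Vsub (⇑φ) lvl j →L[ℝ] Vsub (⇑φ) lvl j,
        B.comp Binv = ContinuousLinearMap.id ℝ _ ∧
        Binv.comp B = ContinuousLinearMap.id ℝ _ ∧
        ‖Binv‖ ≤ Q / ((1 - γ) * σ j)) ∧
      ∀ (f : H) (z h : Vsub (⇑φ) lvl j),
        (B h : H) = Pclm (⇑φ) lvl hfin j (K f) + (z : H) →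
        ‖(h : H) - f‖ ≤ C * (‖f - Pclm (⇑φ) lvl hfin j f‖
          + (σ j)⁻¹ * ‖f‖ * ‖B - Kgal (⇑φ) lvl hfin K j‖ + (σ j)⁻¹ * ‖(z : H)‖) :=
  stmt9_general Q γ Λ m hQ hγ0 hγ1
end
end
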